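/- (Stability of the scheme for the free transmission problem, with explicit bound.) Let d ≥ 1, 0 < λ ≤ Λ, h > 0, ε ∈ (0,1) and 1 ≤ θ₁ < θ₂. Fix a grid Ω̄_h = Ω_h ∪ ∂Ω_h, Isaacs data with ellipticity constants (λ,Λ), f : Ω_h → ℝ with f ≥ 0, g : ∂Ω_h → ℝ, and θ_ε as in the transmission scheme definition, and let G_h be the associated transmission scheme. If u : Ω̄_h → ℝ satisfies G_h(u, x) = 0 for every x ∈ Ω̄_h, then max_{x ∈ Ω̄_h} |u(x)| ≤ (1/ε) ( max_{∂Ω_h} |g| + 1 + (max_{Ω_h} f) · ε^{−θ₂/2} ). In particular the bound is independent of h. -/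
import Mathlib


open scoped BigOperators
open MeasureTheory
open scoped Classical

noncomputable section

namespace Paper

/-- `ℝᵈ` with the Euclidean structure. -/
abbrev E (d : ℕ) := EuclideanSpace ℝ (Fin d)

/-- The standard basis vector `eᵢ` of `ℝᵈ`. -/
def e (d : ℕ) (i : Fin d) : E d := EuclideanSpace.single i 1

/-- For a symmetric matrix, the maximum of the absolute values of its eigenvalues. -/
def specNorm {d : ℕ} (M : Matrix (Fin d) (Fin d) ℝ) : ℝ :=
  if h : M.IsHermitian then ⨆ i, |h.eigenvalues i| else 0

/-- `(λ,Λ)`-uniform ellipticity of `F : S(d) → ℝ`. -/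
def UniformlyElliptic (d : ℕ) (lam Lam : ℝ) (F : Matrix (Fin d) (Fin d) ℝ → ℝ) : Prop :=
  ∀ M N : Matrix (Fin d) (Fin d) ℝ, M.IsHermitian → N.PosSemidef →
    lam * specNorm N ≤ F M - F (M + N) ∧ F M - F (M + N) ≤ Lam * specNorm N

/-- The upwind discretisation `|D_h u (x)|²`. -/
def upwindSq (d : ℕ) (h : ℝ) (u : E d → ℝ) (x : E d) : ℝ :=
  (1 / h ^ 2) * ∑ i : Fin d,
    max (max (u x - u (x + h • e d i)) (u x - u (x - h • e d i))) 0 ^ 2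

/-- The monotone discretisation `L_h^A u (x)` of `Tr (A D²u)`. -/
def Lh (d : ℕ) (h : ℝ) (A : Matrix (Fin d) (Fin d) ℝ) (u : E d → ℝ) (x : E d) : ℝ :=
  (∑ i : Fin d, (A i i - ∑ j ∈ Finset.univ.erase i, |A i j|) *
      ((u (x + h • e d i) + u (x - h • e d i) - 2 * u x) / h ^ 2)) +
  ∑ i : Fin d, ∑ j ∈ Finset.univ.filter (fun j => i < j),
    (max (A i j) 0 *
        ((u (x + h • (e d i + e d j)) + u (x - h • (e d i + e d j)) - 2 * u x) / h ^ 2) +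
      max (-A i j) 0 *
        ((u (x + h • (e d i - e d j)) + u (x - h • (e d i - e d j)) - 2 * u x) / h ^ 2))

/-- Diagonal dominance of a matrix. -/
def DiagDominant {d : ℕ} (A : Matrix (Fin d) (Fin d) ℝ) : Prop :=
  ∀ i, ∑ j ∈ Finset.univ.erase i, |A i j| ≤ A i i

/-- Isaacs data with ellipticity constants `(λ, Λ)`: symmetric, diagonally dominant matrices
with `λ I ≤ A_{α,β} ≤ Λ I`. -/
def IsaacsData (d : ℕ) {ιA ιB : Type*} (lam Lam : ℝ)
    (A : ιA → ιB → Matrix (Fin d) (Fin d) ℝ) : Prop :=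
  ∀ a b, (A a b).IsHermitian ∧ DiagDominant (A a b) ∧
    (A a b - lam • (1 : Matrix (Fin d) (Fin d) ℝ)).PosSemidef ∧
    (Lam • (1 : Matrix (Fin d) (Fin d) ℝ) - A a b).PosSemidef

/-- Discretised Isaacs operator. -/
def Fh (d : ℕ) {ιA ιB : Type*} (h : ℝ) (A : ιA → ιB → Matrix (Fin d) (Fin d) ℝ)
    (u : E d → ℝ) (x : E d) : ℝ :=
  ⨆ a : ιA, ⨅ b : ιB, -(Lh d h (A a b) u x)

/-- A finite grid `Ω̄_h = Ω_h ∪ ∂Ω_h` whose interior points have all stencil points in the grid. -/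
structure Grid (d : ℕ) (h : ℝ) where
  interior : Finset (E d)
  boundary : Finset (E d)
  disj : Disjoint interior boundary
  nonempty : (interior ∪ boundary).Nonempty
  stencil_ax : ∀ x ∈ interior, ∀ i : Fin d,
    x + h • e d i ∈ interior ∪ boundary ∧ x - h • e d i ∈ interior ∪ boundary
  stencil_diag : ∀ x ∈ interior, ∀ i j : Fin d, i < j →
    x + h • (e d i + e d j) ∈ interior ∪ boundary ∧
    x - h • (e d i + e d j) ∈ interior ∪ boundary ∧
    x + h • (e d i - e d j) ∈ interior ∪ boundary ∧
    x - h • (e d i - e d j) ∈ interior ∪ boundary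

/-- The finite difference scheme `G_h` for the regularised pure degenerate equation. -/
def scheme (d : ℕ) {ιA ιB : Type*} {h : ℝ} (ε θ : ℝ)
    (A : ιA → ιB → Matrix (Fin d) (Fin d) ℝ) (G : Grid d h)
    (f g : E d → ℝ) (u : E d → ℝ) (x : E d) : ℝ :=
  if x ∈ G.interior then
    ε * u x + Fh d h A u x - f x / (ε + upwindSq d h u x) ^ (θ / 2)
  else u x - g x

/-- The finite difference scheme `G_h` for the regularised free transmission problem. -/
def schemeT (d : ℕ) {ιA ιB : Type*} {h : ℝ} (ε : ℝ) (θe : ℝ → ℝ)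
    (A : ιA → ιB → Matrix (Fin d) (Fin d) ℝ) (G : Grid d h)
    (f g : E d → ℝ) (u : E d → ℝ) (x : E d) : ℝ :=
  if x ∈ G.interior then
    ε * u x + Fh d h A u x - f x / (ε + upwindSq d h u x) ^ (θe (u x) / 2)
  else u x - g x

/-- The properties of the regularised degeneracy exponent `θ_ε` used in the transmission scheme. -/
def ThetaInterp (ε θ₁ θ₂ : ℝ) (θe : ℝ → ℝ) : Prop :=
  Monotone θe ∧ (∀ t, θ₁ ≤ θe t ∧ θe t ≤ θ₂) ∧
    (∀ t, t ≤ -ε → θe t = θ₁) ∧ (∀ t, ε ≤ t → θe t = θ₂)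

/-- The Hessian matrix of `φ : ℝᵈ → ℝ` at `x`. -/
def hessianMatrix (d : ℕ) (φ : E d → ℝ) (x : E d) : Matrix (Fin d) (Fin d) ℝ :=
  Matrix.of fun i j => fderiv ℝ (fun y => fderiv ℝ φ y (e d j)) x (e d i)

/-- The piecewise-linear interpolation `Θ_ε` between the degeneracy rates `θ₁` and `θ₂`. -/
def ThetaStep (θ₁ θ₂ ε t : ℝ) : ℝ :=
  if t ≤ -ε then θ₁
  else if t < ε then (θ₂ - θ₁) / (2 * ε) * t + (θ₁ + θ₂) / 2
  else θ₂

section Aux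

variable {d : ℕ} {h : ℝ}

lemma Lh_nonpos_at_max (hh : 0 < h) {A : Matrix (Fin d) (Fin d) ℝ}
    (hDD : DiagDominant A) (G : Grid d h) (u : E d → ℝ) {x₀ : E d}
    (hx₀ : x₀ ∈ G.interior) (hmax : ∀ y ∈ G.interior ∪ G.boundary, u y ≤ u x₀) :
    Lh d h A u x₀ ≤ 0 := by
  have hsq : (0:ℝ) < h ^ 2 := by positivity
  unfold Lh
  apply add_nonpos
  · apply Finset.sum_nonpos
    intro i _
    obtain ⟨h1, h2⟩ := G.stencil_ax x₀ hx₀ i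
    have hn : u (x₀ + h • e d i) + u (x₀ - h • e d i) - 2 * u x₀ ≤ 0 := by
      have := hmax _ h1; have := hmax _ h2; linarith
    exact mul_nonpos_iff.mpr (Or.inl ⟨sub_nonneg.mpr (hDD i),
      div_nonpos_iff.mpr (Or.inr ⟨hn, le_of_lt hsq⟩)⟩)
  · apply Finset.sum_nonpos
    intro i _
    apply Finset.sum_nonpos
    intro j hj
    have hij : i < j := (Finset.mem_filter.mp hj).2
    obtain ⟨h1, h2, h3, h4⟩ := G.stencil_diag x₀ hx₀ i j hij
    have hn1 : u (x₀ + h • (e d i + e d j)) + u (x₀ - h • (e d i + e d j)) - 2 * u x₀ ≤ 0 := by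
      have := hmax _ h1; have := hmax _ h2; linarith
    have hn2 : u (x₀ + h • (e d i - e d j)) + u (x₀ - h • (e d i - e d j)) - 2 * u x₀ ≤ 0 := by
      have := hmax _ h3; have := hmax _ h4; linarith
    apply add_nonpos
    · exact mul_nonpos_iff.mpr (Or.inl ⟨le_max_right _ _,
        div_nonpos_iff.mpr (Or.inr ⟨hn1, le_of_lt hsq⟩)⟩)
    · exact mul_nonpos_iff.mpr (Or.inl ⟨le_max_right _ _,
        div_nonpos_iff.mpr (Or.inr ⟨hn2, le_of_lt hsq⟩)⟩)

lemma Lh_nonneg_at_min (hh : 0 < h) {A : Matrix (Fin d) (Fin d) ℝ}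
    (hDD : DiagDominant A) (G : Grid d h) (u : E d → ℝ) {x₀ : E d}
    (hx₀ : x₀ ∈ G.interior) (hmin : ∀ y ∈ G.interior ∪ G.boundary, u x₀ ≤ u y) :
    0 ≤ Lh d h A u x₀ := by
  have hsq : (0:ℝ) < h ^ 2 := by positivity
  unfold Lh
  apply add_nonneg
  · apply Finset.sum_nonneg
    intro i _
    obtain ⟨h1, h2⟩ := G.stencil_ax x₀ hx₀ i
    have hn : 0 ≤ u (x₀ + h • e d i) + u (x₀ - h • e d i) - 2 * u x₀ := by
      have := hmin _ h1; have := hmin _ h2; linarith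
    exact mul_nonneg (sub_nonneg.mpr (hDD i)) (div_nonneg hn (le_of_lt hsq))
  · apply Finset.sum_nonneg
    intro i _
    apply Finset.sum_nonneg
    intro j hj
    have hij : i < j := (Finset.mem_filter.mp hj).2
    obtain ⟨h1, h2, h3, h4⟩ := G.stencil_diag x₀ hx₀ i j hij
    have hn1 : 0 ≤ u (x₀ + h • (e d i + e d j)) + u (x₀ - h • (e d i + e d j)) - 2 * u x₀ := by
      have := hmin _ h1; have := hmin _ h2; linarith
    have hn2 : 0 ≤ u (x₀ + h • (e d i - e d j)) + u (x₀ - h • (e d i - e d j)) - 2 * u x₀ := by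
      have := hmin _ h3; have := hmin _ h4; linarith
    exact add_nonneg
      (mul_nonneg (le_max_right _ _) (div_nonneg hn1 (le_of_lt hsq)))
      (mul_nonneg (le_max_right _ _) (div_nonneg hn2 (le_of_lt hsq)))

lemma upwindSq_nonneg (hh : 0 < h) (u : E d → ℝ) (x : E d) :
    0 ≤ upwindSq d h u x := by
  unfold upwindSq
  apply mul_nonneg (by positivity)
  exact Finset.sum_nonneg fun i _ => sq_nonneg _

end Aux

/-- Stability of the scheme for the free transmission problem,
with the explicit, `h`-independent bound
`|u| ≤ (1/ε)(max_{∂Ω_h}|g| + 1 + (max_{Ω_h} f) ε^{−θ₂/2})`. -/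
theorem schemeT_stability {d : ℕ} (hd : 1 ≤ d) (lam Lam h ε θ₁ θ₂ : ℝ)
    (hlam : 0 < lam) (hlamLam : lam ≤ Lam) (hh : 0 < h) (hε0 : 0 < ε) (hε1 : ε < 1)
    (hθ₁ : 1 ≤ θ₁) (hθ : θ₁ < θ₂)
    {ιA ιB : Type*} [Nonempty ιA] [Nonempty ιB]
    (A : ιA → ιB → Matrix (Fin d) (Fin d) ℝ) (hA : IsaacsData d lam Lam A)
    (G : Grid d h) (hIne : G.interior.Nonempty) (hBne : G.boundary.Nonempty)
    (f g : E d → ℝ) (hf : ∀ x ∈ G.interior, 0 ≤ f x)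
    (θe : ℝ → ℝ) (hθe : ThetaInterp ε θ₁ θ₂ θe)
    (u : E d → ℝ)
    (hu : ∀ x ∈ G.interior ∪ G.boundary, schemeT d ε θe A G f g u x = 0) :
    ∀ x ∈ G.interior ∪ G.boundary,
      |u x| ≤ (1 / ε) * (G.boundary.sup' hBne (fun y => |g y|) + 1 +
        (G.interior.sup' hIne f) * ε ^ (-(θ₂ / 2))) := by

  -- setup
  have hεle1 : ε ≤ 1 := le_of_lt hε1
  obtain ⟨yb, hyb⟩ := id hBne
  obtain ⟨yi, hyi⟩ := id hIne
  have hg0 : 0 ≤ G.boundary.sup' hBne (fun y => |g y|) :=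
    le_trans (abs_nonneg (g yb)) (Finset.le_sup' (fun y => |g y|) hyb)
  have hf0 : 0 ≤ G.interior.sup' hIne f :=
    le_trans (hf yi hyi) (Finset.le_sup' f hyi)
  have hpow : (0:ℝ) < ε ^ (-(θ₂ / 2)) := Real.rpow_pos_of_pos hε0 _
  set Sg := G.boundary.sup' hBne (fun y => |g y|) with hSg
  set Sf := G.interior.sup' hIne f with hSf
  set K := Sg + 1 + Sf * ε ^ (-(θ₂ / 2)) with hKdef
  have hSfpow : 0 ≤ Sf * ε ^ (-(θ₂ / 2)) := mul_nonneg hf0 (le_of_lt hpow)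
  have hK0 : 0 ≤ K := by simp only [hKdef]; linarith
  have h1ε : 1 ≤ 1 / ε := by rw [le_div_iff₀ hε0]; linarith
  have hKeyg : Sg ≤ (1 / ε) * K := by
    have h1 : Sg ≤ K := by simp only [hKdef]; linarith
    have h2 : K ≤ (1 / ε) * K := le_mul_of_one_le_left hK0 h1ε
    linarith
  have hRHS0 : 0 ≤ (1 / ε) * K := mul_nonneg (by positivity) hK0
  -- upper bound
  obtain ⟨x₀, hx₀S, hx₀max⟩ := Finset.exists_max_image (G.interior ∪ G.boundary) u G.nonempty
  have hupper : u x₀ ≤ (1 / ε) * K := by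
    by_cases hmem : x₀ ∈ G.interior
    · have heq := hu x₀ hx₀S
      rw [schemeT, if_pos hmem] at heq
      have hFh : 0 ≤ Fh d h A u x₀ :=
        Real.iSup_nonneg fun a => Real.iInf_nonneg fun b =>
          neg_nonneg.mpr (Lh_nonpos_at_max hh (hA a b).2.1 G u hmem hx₀max)
      set t := θe (u x₀) with ht
      have ht2 : t ≤ θ₂ := (hθe.2.1 (u x₀)).2
      have ht1 : 1 ≤ t := le_trans hθ₁ (hθe.2.1 (u x₀)).1
      have hup := upwindSq_nonneg hh u x₀
      have hp0 : (0:ℝ) < ε ^ (t / 2) := Real.rpow_pos_of_pos hε0 _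
      have hp1 : ε ^ (t / 2) ≤ (ε + upwindSq d h u x₀) ^ (t / 2) :=
        Real.rpow_le_rpow (le_of_lt hε0) (le_add_of_nonneg_right hup) (by linarith)
      have hfx : 0 ≤ f x₀ := hf x₀ hmem
      have step1 : f x₀ / (ε + upwindSq d h u x₀) ^ (t / 2) ≤ f x₀ / ε ^ (t / 2) := by
        gcongr
      have step2 : f x₀ / ε ^ (t / 2) = f x₀ * ε ^ (-(t / 2)) := by
        rw [Real.rpow_neg (le_of_lt hε0), div_eq_mul_inv]
      have step3 : ε ^ (-(t / 2)) ≤ ε ^ (-(θ₂ / 2)) :=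
        Real.rpow_le_rpow_of_exponent_ge hε0 hεle1 (by linarith)
      have step4 : f x₀ * ε ^ (-(t / 2)) ≤ Sf * ε ^ (-(θ₂ / 2)) := by
        have h5 : f x₀ ≤ Sf := Finset.le_sup' f hmem
        have h6 : (0:ℝ) ≤ ε ^ (-(t / 2)) := le_of_lt (Real.rpow_pos_of_pos hε0 _)
        calc f x₀ * ε ^ (-(t / 2)) ≤ f x₀ * ε ^ (-(θ₂ / 2)) :=
              mul_le_mul_of_nonneg_left step3 hfx
          _ ≤ Sf * ε ^ (-(θ₂ / 2)) := mul_le_mul_of_nonneg_right h5 (le_of_lt hpow)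
      have hεu : ε * u x₀ ≤ K := by
        have : ε * u x₀ ≤ f x₀ / (ε + upwindSq d h u x₀) ^ (t / 2) := by linarith
        rw [step2] at step1
        simp only [hKdef]; linarith
      calc u x₀ = (1 / ε) * (ε * u x₀) := by field_simp
        _ ≤ (1 / ε) * K := mul_le_mul_of_nonneg_left hεu (by positivity)
    · have hbd : x₀ ∈ G.boundary := by
        rcases Finset.mem_union.mp hx₀S with h' | h'
        · exact absurd h' hmem
        · exact h'
      have heq := hu x₀ hx₀S
      rw [schemeT, if_neg hmem] at heq
      have hug : u x₀ = g x₀ := by linarith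
      calc u x₀ = g x₀ := hug
        _ ≤ |g x₀| := le_abs_self _
        _ ≤ Sg := Finset.le_sup' (fun y => |g y|) hbd
        _ ≤ (1 / ε) * K := hKeyg
  -- lower bound
  obtain ⟨x₁, hx₁S, hx₁min⟩ := Finset.exists_min_image (G.interior ∪ G.boundary) u G.nonempty
  have hlower : -((1 / ε) * K) ≤ u x₁ := by
    by_cases hmem : x₁ ∈ G.interior
    · have heq := hu x₁ hx₁S
      rw [schemeT, if_pos hmem] at heq
      have hFh : Fh d h A u x₁ ≤ 0 :=
        Real.iSup_nonpos fun a => Real.iInf_nonpos fun b =>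
          neg_nonpos.mpr (Lh_nonneg_at_min hh (hA a b).2.1 G u hmem hx₁min)
      have hQ : 0 ≤ f x₁ / (ε + upwindSq d h u x₁) ^ (θe (u x₁) / 2) :=
        div_nonneg (hf x₁ hmem)
          (le_of_lt (Real.rpow_pos_of_pos (by linarith [upwindSq_nonneg hh u x₁]) _))
      have : 0 ≤ ε * u x₁ := by linarith
      nlinarith
    · have hbd : x₁ ∈ G.boundary := by
        rcases Finset.mem_union.mp hx₁S with h' | h'
        · exact absurd h' hmem
        · exact h'
      have heq := hu x₁ hx₁S
      rw [schemeT, if_neg hmem] at heq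
      have hug : u x₁ = g x₁ := by linarith
      have : -Sg ≤ g x₁ := by
        have := Finset.le_sup' (fun y => |g y|) hbd
        have := neg_abs_le (g x₁)
        simp only [← hSg] at *
        linarith
      linarith [hKeyg]
  intro x hx
  rw [abs_le]
  exact ⟨le_trans hlower (hx₁min x hx), le_trans (hx₀max x hx) hupper⟩


end Paper
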